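/- For every integer n ≥ 2 and every α ∈ (0,1], with β = 1 − α, one has ∑_{d ≤ n} φ(d)(1 − β^⌊n/d⌋) = (3/π²) · (α Li₂(β)/β) · n² + O(α n (log n)²), where for α = 1 the factor α Li₂(β)/β is interpreted as 1. -/

import Mathlib

noncomputable def Li2 (z : ℝ) : ℝ := ∑' k : ℕ, z ^ (k + 1) / ((k : ℝ) + 1) ^ 2

/-!
Write `β = 1 - α` and `Φ(x) = ∑_{d ≤ x} φ(d)`. Since `1 - β^m = α ∑_{j<m} β^j`, exchanging the
order of summation turns the sum into `α ∑_{j<n} β^j Φ(n/(j+1))`. Möbius inversion of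
`∑_{d ∣ m} φ(d) = m` gives `Φ(x) = (3/π²) x² + O(x log x)`, and
`∑_j β^j (n/(j+1))² = n² Li₂(β)/β` up to a tail `∑_{j ≥ n} 1/(j+1)² ≤ 1/n`. Since `0 ≤ β^j ≤ 1`,
the errors add up to `α · O(x log n)` summed over `x = n/(j+1)`, i.e. `O(α n log² n)`.
-/

open Finset ArithmeticFunction
open scoped ArithmeticFunction.Moebius

lemma sum_range_one_div_add_sq_le {n : ℕ} (hn : n ≠ 0) (N : ℕ) :
    ∑ k ∈ range N, 1 / ((k : ℝ) + n + 1) ^ 2 ≤ 1 / (n : ℝ) := by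
  have h := sum_Ioc_inv_sq_le_sub (α := ℝ) hn (Nat.le_add_right n N)
  rw [← Finset.Ico_add_one_add_one_eq_Ioc, sum_Ico_eq_sum_range, Nat.add_sub_add_right,
    Nat.add_sub_cancel_left] at h
  calc ∑ k ∈ range N, 1 / ((k : ℝ) + n + 1) ^ 2
      = ∑ k ∈ range N, (((n + 1 + k : ℕ) : ℝ) ^ 2)⁻¹ := by
        refine sum_congr rfl fun k _ ↦ ?_
        push_cast; ring
    _ ≤ 1 / n := by
        rw [one_div]
        exact h.trans (sub_le_self _ (by positivity))

lemma summable_one_div_add_one_sq : Summable fun k : ℕ ↦ 1 / ((k : ℝ) + 1) ^ 2 := by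
  simpa using (summable_nat_add_iff 1).mpr (Real.summable_one_div_nat_pow.mpr one_lt_two)

lemma abs_div_add_one_sq_le {f : ℕ → ℝ} (hf : ∀ k, |f k| ≤ 1) (k : ℕ) :
    |f k / ((k : ℝ) + 1) ^ 2| ≤ 1 / ((k : ℝ) + 1) ^ 2 := by
  rw [abs_div, abs_of_pos (by positivity : (0 : ℝ) < ((k : ℝ) + 1) ^ 2)]
  gcongr
  exact hf k

lemma summable_div_add_one_sq {f : ℕ → ℝ} (hf : ∀ k, |f k| ≤ 1) :
    Summable fun k : ℕ ↦ f k / ((k : ℝ) + 1) ^ 2 :=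
  summable_one_div_add_one_sq.of_norm_bounded (abs_div_add_one_sq_le hf)

lemma abs_tsum_sub_sum_range_div_sq_le {f : ℕ → ℝ} (hf : ∀ k, |f k| ≤ 1) {n : ℕ} (hn : n ≠ 0) :
    |∑' k, f k / ((k : ℝ) + 1) ^ 2 - ∑ k ∈ range n, f k / ((k : ℝ) + 1) ^ 2| ≤ 1 / (n : ℝ) := by
  rw [← (summable_div_add_one_sq hf).sum_add_tsum_nat_add n, add_sub_cancel_left]
  have hs : Summable fun k : ℕ ↦ 1 / ((k : ℝ) + n + 1) ^ 2 := by
    simpa [add_right_comm] using (summable_nat_add_iff n).mpr summable_one_div_add_one_sq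
  have htail : ∀ k, ‖f (k + n) / (((k + n : ℕ) : ℝ) + 1) ^ 2‖ ≤ 1 / ((k : ℝ) + n + 1) ^ 2 :=
    fun k ↦ by simpa only [Real.norm_eq_abs, Nat.cast_add] using abs_div_add_one_sq_le hf (k + n)
  exact (tsum_of_norm_bounded hs.hasSum htail).trans
    (hs.tsum_le_of_sum_range_le (sum_range_one_div_add_sq_le hn))

open LSeries.notation in
lemma tsum_moebius_div_sq : ∑' k : ℕ, (μ (k + 1) : ℝ) / ((k : ℝ) + 1) ^ 2 = 6 / Real.pi ^ 2 := by
  have h2 : 1 < (2 : ℂ).re := by norm_num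
  have hprod := LSeries_zeta_mul_Lseries_moebius h2
  rw [LSeries_zeta_eq_riemannZeta h2, riemannZeta_two] at hprod
  have hL : LSeries (↗μ) 2 = ((∑' k : ℕ, (μ (k + 1) : ℝ) / ((k : ℝ) + 1) ^ 2 : ℝ) : ℂ) := by
    rw [LSeries, (LSeriesSummable_moebius_iff.mpr h2).tsum_eq_zero_add, Complex.ofReal_tsum]
    simp [LSeries.term]
  rw [hL] at hprod
  apply Complex.ofReal_injective
  have hπ : (Real.pi : ℂ) ≠ 0 := by simp [Real.pi_ne_zero]
  rw [Complex.ofReal_div, Complex.ofReal_pow, Complex.ofReal_ofNat, eq_div_iff (pow_ne_zero 2 hπ)]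
  linear_combination 6 * hprod

lemma sum_Icc_one_eq_sum_range {M : Type*} [AddCommMonoid M] (f : ℕ → M) (n : ℕ) :
    ∑ k ∈ Icc 1 n, f k = ∑ k ∈ range n, f (k + 1) := by
  rw [range_eq_Ico, sum_Ico_add', zero_add, Ico_add_one_right_eq_Icc]

lemma sum_range_one_div_add_one_le_one_add_log (n : ℕ) :
    ∑ k ∈ range n, 1 / ((k : ℝ) + 1) ≤ 1 + Real.log n := by
  simpa [harmonic] using harmonic_le_one_add_log n

lemma sum_Icc_one_natCast (k : ℕ) : ∑ b ∈ Icc 1 k, (b : ℝ) = k * (k + 1) / 2 := by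
  induction k with
  | zero => simp
  | succ k ih =>
    rw [sum_Icc_succ_top (by omega), ih]
    push_cast
    ring

lemma abs_floor_mul_floor_add_one_sub_sq_le {x : ℝ} (hx : 0 ≤ x) :
    |(⌊x⌋₊ : ℝ) * (⌊x⌋₊ + 1) - x ^ 2| ≤ x := by
  have h₁ := Nat.floor_le hx
  have h₂ := Nat.lt_floor_add_one x
  have h₀ : (0 : ℝ) ≤ ⌊x⌋₊ := Nat.cast_nonneg _
  rw [abs_le]
  constructor <;> nlinarith

lemma abs_floor_sq_sub_sq_le {x : ℝ} (hx : 0 ≤ x) : |(⌊x⌋₊ : ℝ) ^ 2 - x ^ 2| ≤ 2 * x := by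
  have h₁ := Nat.floor_le hx
  have h₂ := Nat.lt_floor_add_one x
  have h₀ : (0 : ℝ) ≤ ⌊x⌋₊ := Nat.cast_nonneg _
  rw [abs_le]
  constructor <;> nlinarith

lemma three_div_pi_sq_le : 3 / Real.pi ^ 2 ≤ 1 / 3 := by
  rw [div_le_iff₀ (by positivity)]
  nlinarith [Real.pi_gt_three]

lemma totient_eq_sum_divisorsAntidiagonal {d : ℕ} (hd : 0 < d) :
    (d.totient : ℝ) = ∑ p ∈ d.divisorsAntidiagonal, (μ p.1 : ℝ) * p.2 :=
  ((sum_eq_iff_sum_mul_moebius_eq (f := fun n ↦ (n.totient : ℝ)) (g := fun n ↦ (n : ℝ))).mp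
    (fun n _ ↦ mod_cast Nat.sum_totient n) d hd).symm

lemma sum_Icc_sum_divisorsAntidiagonal {M : Type*} [AddCommMonoid M] (f : ℕ → ℕ → M) (n : ℕ) :
    ∑ d ∈ Icc 1 n, ∑ p ∈ d.divisorsAntidiagonal, f p.1 p.2
      = ∑ a ∈ Icc 1 n, ∑ b ∈ Icc 1 (n / a), f a b := by
  rw [sum_sigma', sum_sigma']
  refine sum_nbij' (fun x ↦ ⟨x.2.1, x.2.2⟩) (fun x ↦ ⟨x.1 * x.2, (x.1, x.2)⟩) ?_ ?_ ?_ ?_ ?_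
  · rintro ⟨d, a, b⟩ h
    simp only [mem_sigma, mem_Icc, Nat.mem_divisorsAntidiagonal] at h ⊢
    obtain ⟨⟨-, hdn⟩, rfl, hab⟩ := h
    have ha : 0 < a := Nat.pos_of_ne_zero (left_ne_zero_of_mul hab)
    have hb : 0 < b := Nat.pos_of_ne_zero (right_ne_zero_of_mul hab)
    exact ⟨⟨ha, le_trans (Nat.le_mul_of_pos_right a hb) hdn⟩, hb,
      (Nat.le_div_iff_mul_le ha).mpr (by linarith)⟩
  · rintro ⟨a, b⟩ h
    simp only [mem_sigma, mem_Icc, Nat.mem_divisorsAntidiagonal] at h ⊢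
    obtain ⟨⟨ha, -⟩, hb, hbn⟩ := h
    have := (Nat.le_div_iff_mul_le ha).mp hbn
    exact ⟨⟨Nat.one_le_iff_ne_zero.mpr (by positivity), by linarith⟩, trivial, by positivity⟩
  · rintro ⟨d, a, b⟩ h
    simp_all
  · exact fun _ _ ↦ rfl
  · exact fun _ _ ↦ rfl

lemma sum_totient_eq_sum_moebius (n : ℕ) :
    ∑ d ∈ Icc 1 n, (d.totient : ℝ)
      = ∑ a ∈ Icc 1 n, (μ a : ℝ) * (⌊(n : ℝ) / a⌋₊ * (⌊(n : ℝ) / a⌋₊ + 1) / 2) := by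
  rw [sum_congr rfl fun d hd ↦ totient_eq_sum_divisorsAntidiagonal (mem_Icc.mp hd).1,
    sum_Icc_sum_divisorsAntidiagonal (fun a b ↦ (μ a : ℝ) * b)]
  simp only [← mul_sum, sum_Icc_one_natCast, Nat.floor_div_eq_div]

lemma abs_sum_moebius_mul_floor_sub_le (n : ℕ) :
    |∑ a ∈ Icc 1 n, (μ a : ℝ)
        * ((⌊(n : ℝ) / a⌋₊ * (⌊(n : ℝ) / a⌋₊ + 1) - ((n : ℝ) / a) ^ 2) / 2)|
      ≤ n * (1 + Real.log n) / 2 := by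
  calc _ ≤ ∑ a ∈ Icc 1 n, |(μ a : ℝ)
          * ((⌊(n : ℝ) / a⌋₊ * (⌊(n : ℝ) / a⌋₊ + 1) - ((n : ℝ) / a) ^ 2) / 2)| :=
        abs_sum_le_sum_abs _ _
    _ ≤ ∑ a ∈ Icc 1 n, 1 * ((n : ℝ) / a / 2) := by
        refine sum_le_sum fun a _ ↦ ?_
        rw [abs_mul, abs_div, abs_two]
        gcongr
        · exact_mod_cast abs_moebius_le_one
        · exact abs_floor_mul_floor_add_one_sub_sq_le (by positivity)
    _ = n / 2 * ∑ k ∈ range n, 1 / ((k : ℝ) + 1) := by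
        rw [sum_Icc_one_eq_sum_range, mul_sum]
        refine sum_congr rfl fun k _ ↦ ?_
        push_cast
        ring
    _ ≤ n * (1 + Real.log n) / 2 := by
        rw [mul_div_right_comm]
        gcongr
        exact sum_range_one_div_add_one_le_one_add_log n

lemma abs_sum_totient_sub_le (n : ℕ) :
    |∑ d ∈ Icc 1 n, (d.totient : ℝ) - 3 / Real.pi ^ 2 * n ^ 2| ≤ n * (Real.log n + 2) / 2 := by
  rcases Nat.eq_zero_or_pos n with rfl | hn
  · simp
  have hsplit : ∑ d ∈ Icc 1 n, (d.totient : ℝ) - 3 / Real.pi ^ 2 * n ^ 2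
      = ∑ a ∈ Icc 1 n, (μ a : ℝ)
          * ((⌊(n : ℝ) / a⌋₊ * (⌊(n : ℝ) / a⌋₊ + 1) - ((n : ℝ) / a) ^ 2) / 2)
        + n ^ 2 / 2 * (∑ k ∈ range n, (μ (k + 1) : ℝ) / ((k : ℝ) + 1) ^ 2 - 6 / Real.pi ^ 2) := by
    have hsq : ∑ k ∈ range n, (μ (k + 1) : ℝ) / ((k : ℝ) + 1) ^ 2
        = ∑ a ∈ Icc 1 n, (μ a : ℝ) / (a : ℝ) ^ 2 := by
      rw [sum_Icc_one_eq_sum_range]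
      push_cast
      rfl
    rw [sum_totient_eq_sum_moebius, hsq, mul_sub, mul_sum, ← add_sub_assoc, ← sum_add_distrib]
    congr 1
    · exact sum_congr rfl fun a _ ↦ by ring
    · ring
  have htail : |∑ k ∈ range n, (μ (k + 1) : ℝ) / ((k : ℝ) + 1) ^ 2 - 6 / Real.pi ^ 2|
      ≤ 1 / (n : ℝ) := by
    rw [← tsum_moebius_div_sq, abs_sub_comm]
    exact abs_tsum_sub_sum_range_div_sq_le (fun k ↦ mod_cast abs_moebius_le_one) hn.ne'
  rw [hsplit]
  calc _ ≤ n * (1 + Real.log n) / 2 + n ^ 2 / 2 * (1 / n) := by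
        refine (abs_add_le _ _).trans (add_le_add (abs_sum_moebius_mul_floor_sub_le n) ?_)
        rw [abs_mul, abs_of_nonneg (by positivity)]
        gcongr
    _ = n * (Real.log n + 2) / 2 := by
        field_simp
        ring

lemma abs_sum_totient_div_sub_le (n k : ℕ) :
    |∑ d ∈ Icc 1 (n / k), (d.totient : ℝ) - 3 / Real.pi ^ 2 * ((n : ℝ) / k) ^ 2|
      ≤ (n : ℝ) / k * (Real.log n + 4) / 2 := by
  set x : ℝ := (n : ℝ) / k
  have hx : 0 ≤ x := by positivity
  have hm : ((n / k : ℕ) : ℝ) = ⌊x⌋₊ := by rw [Nat.floor_div_eq_div]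
  have hmx : ((n / k : ℕ) : ℝ) ≤ x := hm ▸ Nat.floor_le hx
  have hlog : Real.log (n / k : ℕ) ≤ Real.log n := by
    rcases Nat.eq_zero_or_pos (n / k) with h | h
    · simp [h, Real.log_natCast_nonneg]
    · exact Real.log_le_log (by exact_mod_cast h) (by exact_mod_cast Nat.div_le_self n k)
  have hΦ := abs_sum_totient_sub_le (n / k)
  have hsq := abs_floor_sq_sub_sq_le hx
  rw [← hm] at hsq
  have hmain := mul_le_mul hmx (add_le_add_right hlog 2) (by positivity) hx
  have herr := mul_le_mul three_div_pi_sq_le hsq (abs_nonneg _) (by norm_num)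
  calc _ = |(∑ d ∈ Icc 1 (n / k), (d.totient : ℝ) - 3 / Real.pi ^ 2 * ((n / k : ℕ) : ℝ) ^ 2)
        + 3 / Real.pi ^ 2 * (((n / k : ℕ) : ℝ) ^ 2 - x ^ 2)| := by ring_nf
    _ ≤ _ := abs_add_le _ _
    _ ≤ x * (Real.log n + 4) / 2 := by
        rw [abs_mul, abs_of_pos (by positivity : (0 : ℝ) < 3 / Real.pi ^ 2)]
        linarith

lemma sum_mul_one_sub_pow_div {R : Type*} [CommRing R] (f : ℕ → R) (β : R) (n : ℕ) :
    ∑ d ∈ Icc 1 n, f d * (1 - β ^ (n / d))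
      = (1 - β) * ∑ j ∈ range n, β ^ j * ∑ d ∈ Icc 1 (n / (j + 1)), f d := by
  -- `j < n / d` and `d ≤ n / (j + 1)` both say `(j + 1) * d ≤ n`.
  have hmem : ∀ d j, d ∈ Icc 1 n ∧ j ∈ range (n / d) ↔ d ∈ Icc 1 (n / (j + 1)) ∧ j ∈ range n := by
    intro d j
    simp only [mem_Icc, mem_range]
    constructor
    · rintro ⟨⟨hd, -⟩, hj⟩
      have := (Nat.le_div_iff_mul_le hd).mp hj
      exact ⟨⟨hd, (Nat.le_div_iff_mul_le j.succ_pos).mpr (by linarith)⟩, by nlinarith⟩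
    · rintro ⟨⟨hd, hdj⟩, -⟩
      have := (Nat.le_div_iff_mul_le j.succ_pos).mp hdj
      exact ⟨⟨hd, by nlinarith⟩, (Nat.le_div_iff_mul_le hd).mpr (by linarith)⟩
  simp only [← mul_neg_geom_sum, mul_sum]
  rw [sum_comm' hmem]
  refine sum_congr rfl fun j _ ↦ sum_congr rfl fun d _ ↦ ?_
  ring

lemma Li2_eq_mul_tsum (z : ℝ) : Li2 z = z * ∑' k : ℕ, z ^ k / ((k : ℝ) + 1) ^ 2 := by
  rw [Li2, ← tsum_mul_left]
  simp only [pow_succ, mul_div_assoc, mul_comm]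

lemma ite_mul_Li2_div_eq_mul_tsum (α : ℝ) :
    (if α = 1 then 1 else α * Li2 (1 - α) / (1 - α))
      = α * ∑' k : ℕ, (1 - α) ^ k / ((k : ℝ) + 1) ^ 2 := by
  split_ifs with h
  · subst h
    rw [sub_self, tsum_eq_single 0 fun k hk ↦ by simp [hk]]
    simp
  · rw [Li2_eq_mul_tsum]
    field_simp [sub_ne_zero.mpr (Ne.symm h)]

lemma abs_sum_pow_mul_sum_totient_div_sub_le {β : ℝ} (hβ : |β| ≤ 1) (n : ℕ) :
    |∑ j ∈ range n, β ^ j * (∑ d ∈ Icc 1 (n / (j + 1)), (d.totient : ℝ)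
        - 3 / Real.pi ^ 2 * ((n : ℝ) / (j + 1)) ^ 2)|
      ≤ n * (1 + Real.log n) * (Real.log n + 4) / 2 := by
  calc _ ≤ ∑ j ∈ range n, |β ^ j * (∑ d ∈ Icc 1 (n / (j + 1)), (d.totient : ℝ)
          - 3 / Real.pi ^ 2 * ((n : ℝ) / (j + 1)) ^ 2)| := abs_sum_le_sum_abs _ _
    _ ≤ ∑ j ∈ range n, 1 * ((n : ℝ) / (j + 1) * (Real.log n + 4) / 2) := by
        refine sum_le_sum fun j _ ↦ ?_
        rw [abs_mul, abs_pow]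
        refine mul_le_mul (pow_le_one₀ (abs_nonneg β) hβ) ?_ (abs_nonneg _) zero_le_one
        simpa using abs_sum_totient_div_sub_le n (j + 1)
    _ = n * (Real.log n + 4) / 2 * ∑ j ∈ range n, 1 / ((j : ℝ) + 1) := by
        rw [mul_sum]
        exact sum_congr rfl fun j _ ↦ by ring
    _ ≤ n * (Real.log n + 4) / 2 * (1 + Real.log n) := by
        gcongr
        exact sum_range_one_div_add_one_le_one_add_log n
    _ = _ := by ring

lemma abs_sum_totient_mul_one_sub_pow_sub_le {n : ℕ} (hn : n ≠ 0) {α : ℝ} (hα₀ : 0 ≤ α)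
    (hα₁ : α ≤ 1) :
    |∑ d ∈ Icc 1 n, (d.totient : ℝ) * (1 - (1 - α) ^ (n / d))
        - 3 / Real.pi ^ 2 * (α * ∑' k : ℕ, (1 - α) ^ k / ((k : ℝ) + 1) ^ 2) * n ^ 2|
      ≤ α * n * ((1 + Real.log n) * (Real.log n + 4) / 2 + 1) := by
  set β := 1 - α
  set c := 3 / Real.pi ^ 2
  set A := ∑ j ∈ range n, β ^ j * (∑ d ∈ Icc 1 (n / (j + 1)), (d.totient : ℝ)
    - c * ((n : ℝ) / (j + 1)) ^ 2)
  set T := ∑' k : ℕ, β ^ k / ((k : ℝ) + 1) ^ 2 - ∑ k ∈ range n, β ^ k / ((k : ℝ) + 1) ^ 2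
  have hβ : |β| ≤ 1 := abs_le.mpr ⟨by linarith, by linarith⟩
  have hsplit : ∑ d ∈ Icc 1 n, (d.totient : ℝ) * (1 - β ^ (n / d))
        - c * (α * ∑' k : ℕ, β ^ k / ((k : ℝ) + 1) ^ 2) * n ^ 2 = α * (A - c * n ^ 2 * T) := by
    have hA : A = ∑ j ∈ range n, β ^ j * ∑ d ∈ Icc 1 (n / (j + 1)), (d.totient : ℝ)
        - c * n ^ 2 * ∑ k ∈ range n, β ^ k / ((k : ℝ) + 1) ^ 2 := by
      simp only [A, mul_sub, sum_sub_distrib, mul_sum]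
      congr 1
      exact sum_congr rfl fun j _ ↦ by field_simp
    rw [sum_mul_one_sub_pow_div, sub_sub_cancel, hA]
    ring
  have hT : |T| ≤ 1 / n := abs_tsum_sub_sum_range_div_sq_le
    (fun k ↦ by rw [abs_pow]; exact pow_le_one₀ (abs_nonneg β) hβ) hn
  have hcT : c * n ^ 2 * |T| ≤ (n : ℝ) := by
    calc c * (n : ℝ) ^ 2 * |T| ≤ 1 * (n : ℝ) ^ 2 * (1 / n) := by
          gcongr
          linarith [three_div_pi_sq_le]
      _ = (n : ℝ) := by field_simp
  rw [hsplit, abs_mul, abs_of_nonneg hα₀]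
  calc _ ≤ α * (|A| + c * n ^ 2 * |T|) := by
        gcongr
        refine (abs_sub _ _).trans_eq ?_
        rw [abs_mul, abs_of_nonneg (by positivity : 0 ≤ c * n ^ 2)]
    _ ≤ α * (n * (1 + Real.log n) * (Real.log n + 4) / 2 + n) := by
        gcongr
        exact abs_sum_pow_mul_sum_totient_div_sub_le hβ n
    _ = _ := by ring

/-- `∑_{d ≤ n} φ(d)(1 − β^⌊n/d⌋) = (3/π²)·(α Li₂(β)/β)·n² + O(α n (log n)²)`,
uniformly in `α ∈ (0,1]`; for `α = 1` the factor `α Li₂(β)/β` is interpreted as `1`. -/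
theorem sum_totient_one_sub_pow : ∃ C : ℝ, 0 < C ∧
    ∀ n : ℕ, 2 ≤ n → ∀ α : ℝ, 0 < α → α ≤ 1 →
      |(∑ d ∈ Finset.Icc 1 n, (Nat.totient d : ℝ) * (1 - (1 - α) ^ (n / d)))
          - 3 / Real.pi ^ 2 *
              (if α = 1 then 1 else α * Li2 (1 - α) / (1 - α)) * (n : ℝ) ^ 2|
        ≤ C * α * (n : ℝ) * Real.log n ^ 2 := by
  refine ⟨18, by norm_num, fun n hn α hα₀ hα₁ ↦ ?_⟩
  have hlog : 1 / 2 ≤ Real.log n := by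
    have := Real.log_le_log two_pos (by exact_mod_cast hn : (2 : ℝ) ≤ n)
    linarith [Real.log_two_gt_d9]
  have hpoly : (1 + Real.log n) * (Real.log n + 4) / 2 + 1 ≤ 18 * Real.log n ^ 2 := by nlinarith
  rw [ite_mul_Li2_div_eq_mul_tsum]
  calc _ ≤ α * n * ((1 + Real.log n) * (Real.log n + 4) / 2 + 1) :=
        abs_sum_totient_mul_one_sub_pow_sub_le (by omega) hα₀.le hα₁
    _ ≤ α * n * (18 * Real.log n ^ 2) := by gcongr
    _ = 18 * α * n * Real.log n ^ 2 := by ring
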